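/- (Decomposition of the second Wald estimand.) Under IV independence, one-sided noncompliance for both treatments, and P(D_A(1,1)=1)>0, the estimand δ_{A1} = (E[Y|Z_A=1,Z_B=1]−E[Y|Z_A=0,Z_B=1])/(E[D_A|Z_A=1,Z_B=1]−E[D_A|Z_A=0,Z_B=1]) satisfies δ_{A1}·P(C_A) = E[(Y(1,0)−Y(0,0))·1_{C_A}] + E[(Y(0,1)−Y(0,0))·1_{J_B}] − E[(Y(0,1)−Y(0,0))·1_{Dd_B}] + E[(Y(1,1)−Y(0,1)−Y(1,0)+Y(0,0))·1_{C_A∩C_B}], where C_A={D_A(1,1)=1}, C_B={D_B(1,1)=1}, J_B={D_B(0,1)=0,D_B(1,1)=1}, Dd_B={D_B(0,1)=1,D_B(1,1)=0}. -/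

import Mathlib

open MeasureTheory ProbabilityTheory

/-- Conditional expectation of `X` given the event `E`: `E[X · 1_E] / P(E)`. -/
noncomputable def cexp {Ω : Type*} [MeasurableSpace Ω] (μ : Measure Ω) (X : Ω → ℝ) (E : Set Ω) : ℝ :=
  (∫ ω in E, X ω ∂μ) / (μ E).toReal

/-!
On `{Z = (1,1)}` the observed outcome is `Y(D_A(1,1), D_B(1,1))`, and on `{Z = (0,1)}` one-sided
noncompliance makes it `Y(0, D_B(0,1))`. For binary treatments `Y(a, b)` coincides with its
bilinear interpolation in `(a, b)`, which is a measurable function of the potential variables, so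
independence of the instruments turns each conditional mean of the Wald ratio into an
unconditional mean; the first stage becomes `P(C_A) - 0`. Pointwise, the difference of the two
interpolations is the sum of the four indicator terms, since
`D_B(1,1) - D_B(0,1) = 1_{J_B} - 1_{Dd_B}` for binary treatments.
-/

section Conditioning

variable {Ω : Type*} [MeasurableSpace Ω] {μ : Measure Ω}

theorem integral_eq_measureReal_of_binary {D : Ω → ℝ} (hD : Measurable D)
    (hD₁ : ∀ ω, D ω = 0 ∨ D ω = 1) : ∫ ω, D ω ∂μ = μ.real {ω | D ω = 1} := by
  rw [← integral_indicator_one (s := {ω | D ω = 1}) (hD (measurableSet_singleton 1))]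
  congr with ω
  rcases hD₁ ω with h | h <;> simp [h]

variable [IsFiniteMeasure μ] {X W : Ω → ℝ}

theorem cexp_preimage_eq_integral_of_indepFun {β : Type*} [MeasurableSpace β] {Z : Ω → β}
    {s : Set β} (hZ : Measurable Z) (hs : MeasurableSet s) (hW : AEStronglyMeasurable W μ)
    (hZW : IndepFun Z W μ) (hZs : μ (Z ⁻¹' s) ≠ 0) (hXW : Set.EqOn X W (Z ⁻¹' s)) :
    cexp μ X (Z ⁻¹' s) = ∫ ω, W ω ∂μ := by
  have hZs' : μ.real (Z ⁻¹' s) ≠ 0 := (measureReal_ne_zero_iff).2 hZs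
  have hset : ∫ ω in Z ⁻¹' s, W ω ∂μ = μ.real (Z ⁻¹' s) * ∫ ω, W ω ∂μ :=
    ((IndepFun_iff_Indep Z W μ).1 hZW).setIntegral_eq_mul (f := id) hZ.comap_le
      hW.aemeasurable ⟨s, hs, rfl⟩ aestronglyMeasurable_id
  rw [cexp, setIntegral_congr_fun (hZ hs) hXW, hset, ← measureReal_def,
    mul_div_cancel_left₀ _ hZs']

theorem cexp_setOf_eq_integral_of_indepFun {Z₁ Z₂ : Ω → ℝ} {a b : ℝ} (hZ₁ : Measurable Z₁)
    (hZ₂ : Measurable Z₂) (hW : AEStronglyMeasurable W μ)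
    (hZW : IndepFun (fun ω => (Z₁ ω, Z₂ ω)) W μ) (hpos : 0 < μ {ω | Z₁ ω = a ∧ Z₂ ω = b})
    (hXW : Set.EqOn X W {ω | Z₁ ω = a ∧ Z₂ ω = b}) :
    cexp μ X {ω | Z₁ ω = a ∧ Z₂ ω = b} = ∫ ω, W ω ∂μ := by
  have hset : {ω | Z₁ ω = a ∧ Z₂ ω = b} = (fun ω => (Z₁ ω, Z₂ ω)) ⁻¹' {(a, b)} := by
    ext; simp
  rw [hset] at hpos hXW ⊢
  exact cexp_preimage_eq_integral_of_indepFun (hZ₁.prodMk hZ₂) (measurableSet_singleton _) hW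
    hZW hpos.ne' hXW

end Conditioning

def bilinInterp (y₀₀ y₀₁ y₁₀ y₁₁ a b : ℝ) : ℝ :=
  y₀₀ + (y₁₀ - y₀₀) * a + (y₀₁ - y₀₀) * b + (y₁₁ - y₀₁ - y₁₀ + y₀₀) * (a * b)

theorem bilinInterp_eq (f : ℝ → ℝ → ℝ) {a b : ℝ} (ha : a = 0 ∨ a = 1) (hb : b = 0 ∨ b = 1) :
    bilinInterp (f 0 0) (f 0 1) (f 1 0) (f 1 1) a b = f a b := by
  rcases ha with rfl | rfl <;> rcases hb with rfl | rfl <;> simp only [bilinInterp] <;> ring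

section Decomposition

variable {Ω : Type*} {Y₀₀ Y₀₁ Y₁₀ Y₁₁ A B B' : Ω → ℝ}

theorem bilinInterp_sub_bilinInterp_zero {ω : Ω} (hA : A ω = 0 ∨ A ω = 1)
    (hB : B ω = 0 ∨ B ω = 1) (hB' : B' ω = 0 ∨ B' ω = 1) :
    bilinInterp (Y₀₀ ω) (Y₀₁ ω) (Y₁₀ ω) (Y₁₁ ω) (A ω) (B ω)
        - bilinInterp (Y₀₀ ω) (Y₀₁ ω) (Y₁₀ ω) (Y₁₁ ω) 0 (B' ω) =
      {ω | A ω = 1}.indicator (fun ω => Y₁₀ ω - Y₀₀ ω) ω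
        + {ω | B' ω = 0 ∧ B ω = 1}.indicator (fun ω => Y₀₁ ω - Y₀₀ ω) ω
        - {ω | B' ω = 1 ∧ B ω = 0}.indicator (fun ω => Y₀₁ ω - Y₀₀ ω) ω
        + ({ω | A ω = 1} ∩ {ω | B ω = 1}).indicator
            (fun ω => Y₁₁ ω - Y₀₁ ω - Y₁₀ ω + Y₀₀ ω) ω := by
  rcases hA with hA | hA <;> rcases hB with hB | hB <;> rcases hB' with hB' | hB' <;>
    simp [bilinInterp, hA, hB, hB'] <;> ring

variable [MeasurableSpace Ω] {μ : Measure Ω}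

theorem integrable_bilinInterp (h₀₀ : Integrable Y₀₀ μ) (h₀₁ : Integrable Y₀₁ μ)
    (h₁₀ : Integrable Y₁₀ μ) (h₁₁ : Integrable Y₁₁ μ) (hA : AEStronglyMeasurable A μ)
    (hB : AEStronglyMeasurable B μ) (hA₁ : ∀ ω, ‖A ω‖ ≤ 1) (hB₁ : ∀ ω, ‖B ω‖ ≤ 1) :
    Integrable (fun ω => bilinInterp (Y₀₀ ω) (Y₀₁ ω) (Y₁₀ ω) (Y₁₁ ω) (A ω) (B ω)) μ := by
  have hAB : ∀ ω, ‖A ω * B ω‖ ≤ 1 := fun ω => by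
    rw [norm_mul]; exact mul_le_one₀ (hA₁ ω) (norm_nonneg _) (hB₁ ω)
  exact ((h₀₀.add ((h₁₀.sub h₀₀).mul_bdd hA (ae_of_all _ hA₁))).add
    ((h₀₁.sub h₀₀).mul_bdd hB (ae_of_all _ hB₁))).add
    ((((h₁₁.sub h₀₁).sub h₁₀).add h₀₀).mul_bdd (hA.mul hB) (ae_of_all _ hAB))

theorem integral_bilinInterp_sub_integral_bilinInterp_zero (h₀₀ : Integrable Y₀₀ μ)
    (h₀₁ : Integrable Y₀₁ μ) (h₁₀ : Integrable Y₁₀ μ) (h₁₁ : Integrable Y₁₁ μ)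
    (hA : Measurable A) (hB : Measurable B) (hB' : Measurable B')
    (hA₁ : ∀ ω, A ω = 0 ∨ A ω = 1) (hB₁ : ∀ ω, B ω = 0 ∨ B ω = 1)
    (hB'₁ : ∀ ω, B' ω = 0 ∨ B' ω = 1) :
    ∫ ω, bilinInterp (Y₀₀ ω) (Y₀₁ ω) (Y₁₀ ω) (Y₁₁ ω) (A ω) (B ω) ∂μ
        - ∫ ω, bilinInterp (Y₀₀ ω) (Y₀₁ ω) (Y₁₀ ω) (Y₁₁ ω) 0 (B' ω) ∂μ =
      (∫ ω in {ω | A ω = 1}, (Y₁₀ ω - Y₀₀ ω) ∂μ)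
        + (∫ ω in {ω | B' ω = 0 ∧ B ω = 1}, (Y₀₁ ω - Y₀₀ ω) ∂μ)
        - (∫ ω in {ω | B' ω = 1 ∧ B ω = 0}, (Y₀₁ ω - Y₀₀ ω) ∂μ)
        + ∫ ω in {ω | A ω = 1} ∩ {ω | B ω = 1}, (Y₁₁ ω - Y₀₁ ω - Y₁₀ ω + Y₀₀ ω) ∂μ := by
  have hnorm : ∀ {D : Ω → ℝ}, (∀ ω, D ω = 0 ∨ D ω = 1) → ∀ ω, ‖D ω‖ ≤ 1 := fun hD ω => by
    rcases hD ω with h | h <;> simp [h]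
  have hlevel : ∀ {D : Ω → ℝ}, Measurable D → ∀ c : ℝ, MeasurableSet {ω | D ω = c} :=
    fun hD c => hD (measurableSet_singleton c)
  have mA := hlevel hA 1
  have mJ : MeasurableSet {ω | B' ω = 0 ∧ B ω = 1} := (hlevel hB' 0).inter (hlevel hB 1)
  have mD : MeasurableSet {ω | B' ω = 1 ∧ B ω = 0} := (hlevel hB' 1).inter (hlevel hB 0)
  have mAB := mA.inter (hlevel hB 1)
  have hd₁ : Integrable (fun ω => Y₁₀ ω - Y₀₀ ω) μ := h₁₀.sub h₀₀
  have hd₂ : Integrable (fun ω => Y₀₁ ω - Y₀₀ ω) μ := h₀₁.sub h₀₀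
  have hd₃ : Integrable (fun ω => Y₁₁ ω - Y₀₁ ω - Y₁₀ ω + Y₀₀ ω) μ :=
    ((h₁₁.sub h₀₁).sub h₁₀).add h₀₀
  have hg₁ := hd₁.indicator mA
  have hg₂ := hd₂.indicator mJ
  have hg₂' := hd₂.indicator mD
  have hg₃ := hd₃.indicator mAB
  rw [← integral_sub (integrable_bilinInterp h₀₀ h₀₁ h₁₀ h₁₁ hA.aestronglyMeasurable
      hB.aestronglyMeasurable (hnorm hA₁) (hnorm hB₁))
      (integrable_bilinInterp h₀₀ h₀₁ h₁₀ h₁₁ aestronglyMeasurable_const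
      hB'.aestronglyMeasurable (by simp) (hnorm hB'₁)),
    integral_congr_ae (ae_of_all _ fun ω =>
      bilinInterp_sub_bilinInterp_zero (hA₁ ω) (hB₁ ω) (hB'₁ ω)),
    integral_add ?_ hg₃, integral_sub ?_ hg₂', integral_add hg₁ hg₂, integral_indicator mA,
    integral_indicator mJ, integral_indicator mD, integral_indicator mAB]
  · exact hg₁.add hg₂
  · exact (hg₁.add hg₂).sub hg₂'

end Decomposition

theorem stmt_16_general {Ω : Type*} [MeasurableSpace Ω] (μ : Measure Ω) [IsProbabilityMeasure μ]
    (ZA ZB : Ω → ℝ) (DA DB : ℝ → ℝ → Ω → ℝ) (Y : ℝ → ℝ → Ω → ℝ)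
    (DAobs DBobs Yobs : Ω → ℝ)
    (hZAm : Measurable ZA) (hZBm : Measurable ZB)
    (hDAm : ∀ z1 z2 : ℝ, (z1 = 0 ∨ z1 = 1) → (z2 = 0 ∨ z2 = 1) → Measurable (DA z1 z2))
    (hDBm : ∀ z1 z2 : ℝ, (z1 = 0 ∨ z1 = 1) → (z2 = 0 ∨ z2 = 1) → Measurable (DB z1 z2))
    (hDAbin : ∀ z1 z2 : ℝ, (z1 = 0 ∨ z1 = 1) → (z2 = 0 ∨ z2 = 1) →
      ∀ ω, DA z1 z2 ω = 0 ∨ DA z1 z2 ω = 1)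
    (hDBbin : ∀ z1 z2 : ℝ, (z1 = 0 ∨ z1 = 1) → (z2 = 0 ∨ z2 = 1) →
      ∀ ω, DB z1 z2 ω = 0 ∨ DB z1 z2 ω = 1)
    (hYint : ∀ d1 d2 : ℝ, (d1 = 0 ∨ d1 = 1) → (d2 = 0 ∨ d2 = 1) → Integrable (Y d1 d2) μ)
    (hDAobs : ∀ ω, DAobs ω = DA (ZA ω) (ZB ω) ω)
    (hDBobs : ∀ ω, DBobs ω = DB (ZA ω) (ZB ω) ω)
    (hYobs : ∀ ω, Yobs ω = Y (DAobs ω) (DBobs ω) ω)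
    (hindep : IndepFun (fun ω => (ZA ω, ZB ω))
      (fun ω => (Y 0 0 ω, Y 0 1 ω, Y 1 0 ω, Y 1 1 ω,
        DA 0 0 ω, DA 0 1 ω, DA 1 0 ω, DA 1 1 ω,
        DB 0 0 ω, DB 0 1 ω, DB 1 0 ω, DB 1 1 ω)) μ)
    (honcA : ∀ z : ℝ, (z = 0 ∨ z = 1) → ∀ ω, DA 0 z ω = 0)
    (hz11 : 0 < μ {ω | ZA ω = 1 ∧ ZB ω = 1}) (hz01 : 0 < μ {ω | ZA ω = 0 ∧ ZB ω = 1})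
    (CA CB JB DdB : Set Ω)
    (hCA : CA = {ω | DA 1 1 ω = 1}) (hCB : CB = {ω | DB 1 1 ω = 1})
    (hJB : JB = {ω | DB 0 1 ω = 0 ∧ DB 1 1 ω = 1})
    (hDdB : DdB = {ω | DB 0 1 ω = 1 ∧ DB 1 1 ω = 0})
    (hfs : 0 < μ CA)
    (δA1 : ℝ)
    (hδ : δA1 = (cexp μ Yobs {ω | ZA ω = 1 ∧ ZB ω = 1} -
        cexp μ Yobs {ω | ZA ω = 0 ∧ ZB ω = 1}) /
      (cexp μ DAobs {ω | ZA ω = 1 ∧ ZB ω = 1} -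
        cexp μ DAobs {ω | ZA ω = 0 ∧ ZB ω = 1})) :
    δA1 * (μ CA).toReal = (∫ ω in CA, (Y 1 0 ω - Y 0 0 ω) ∂μ) +
      (∫ ω in JB, (Y 0 1 ω - Y 0 0 ω) ∂μ) - (∫ ω in DdB, (Y 0 1 ω - Y 0 0 ω) ∂μ) +
        ∫ ω in CA ∩ CB, (Y 1 1 ω - Y 0 1 ω - Y 1 0 ω + Y 0 0 ω) ∂μ := by
  have o₀ : (0 : ℝ) = 0 ∨ (0 : ℝ) = 1 := Or.inl rfl
  have o₁ : (1 : ℝ) = 0 ∨ (1 : ℝ) = 1 := Or.inr rfl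
  obtain ⟨hY₀₀, hY₀₁, hY₁₀, hY₁₁⟩ : _ ∧ _ ∧ _ ∧ _ :=
    ⟨hYint 0 0 o₀ o₀, hYint 0 1 o₀ o₁, hYint 1 0 o₁ o₀, hYint 1 1 o₁ o₁⟩
  obtain ⟨hA₁₁, hB₁₁, hB₀₁⟩ : _ ∧ _ ∧ _ := ⟨hDAm 1 1 o₁ o₁, hDBm 1 1 o₁ o₁, hDBm 0 1 o₀ o₁⟩
  have hnum₁₁ : cexp μ Yobs {ω | ZA ω = 1 ∧ ZB ω = 1} = ∫ ω,
      bilinInterp (Y 0 0 ω) (Y 0 1 ω) (Y 1 0 ω) (Y 1 1 ω) (DA 1 1 ω) (DB 1 1 ω) ∂μ := by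
    -- `ψ` reads `Y 0 0, Y 0 1, Y 1 0, Y 1 1, DA 1 1, DB 1 1` off the tuple in `hindep`.
    have hZW := hindep.comp measurable_id (ψ := fun p => bilinInterp p.1 p.2.1 p.2.2.1 p.2.2.2.1
      p.2.2.2.2.2.2.2.1 p.2.2.2.2.2.2.2.2.2.2.2) (by unfold bilinInterp; fun_prop)
    refine cexp_setOf_eq_integral_of_indepFun hZAm hZBm (by unfold bilinInterp; fun_prop) hZW hz11
      fun ω ⟨hza, hzb⟩ => ?_
    rw [hYobs, hDAobs, hDBobs, hza, hzb]
    exact (bilinInterp_eq (fun a b => Y a b ω) (hDAbin 1 1 o₁ o₁ ω) (hDBbin 1 1 o₁ o₁ ω)).symm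
  have hnum₀₁ : cexp μ Yobs {ω | ZA ω = 0 ∧ ZB ω = 1} = ∫ ω,
      bilinInterp (Y 0 0 ω) (Y 0 1 ω) (Y 1 0 ω) (Y 1 1 ω) 0 (DB 0 1 ω) ∂μ := by
    have hZW := hindep.comp measurable_id (ψ := fun p => bilinInterp p.1 p.2.1 p.2.2.1 p.2.2.2.1
      0 p.2.2.2.2.2.2.2.2.2.1) (by unfold bilinInterp; fun_prop)
    refine cexp_setOf_eq_integral_of_indepFun hZAm hZBm (by unfold bilinInterp; fun_prop) hZW hz01
      fun ω ⟨hza, hzb⟩ => ?_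
    rw [hYobs, hDAobs, hDBobs, hza, hzb, honcA 1 o₁ ω]
    exact (bilinInterp_eq (fun a b => Y a b ω) o₀ (hDBbin 0 1 o₀ o₁ ω)).symm
  have hden₁₁ : cexp μ DAobs {ω | ZA ω = 1 ∧ ZB ω = 1} = (μ CA).toReal := by
    have hZW := hindep.comp measurable_id (ψ := fun p => p.2.2.2.2.2.2.2.1) (by fun_prop)
    rw [cexp_setOf_eq_integral_of_indepFun hZAm hZBm hA₁₁.aestronglyMeasurable hZW hz11
      fun ω ⟨hza, hzb⟩ => by rw [hDAobs, hza, hzb],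
      integral_eq_measureReal_of_binary hA₁₁ (hDAbin 1 1 o₁ o₁), hCA, measureReal_def]
  have hden₀₁ : cexp μ DAobs {ω | ZA ω = 0 ∧ ZB ω = 1} = 0 := by
    rw [cexp_setOf_eq_integral_of_indepFun hZAm hZBm aestronglyMeasurable_const
      (indepFun_const_right _ 0) hz01 fun ω ⟨hza, hzb⟩ => by rw [hDAobs, hza, hzb, honcA 1 o₁ ω],
      integral_zero]
  have hCA_ne : (μ CA).toReal ≠ 0 := (ENNReal.toReal_pos hfs.ne' (measure_ne_top μ _)).ne'
  rw [hδ, hnum₁₁, hnum₀₁, hden₁₁, hden₀₁, sub_zero, div_mul_cancel₀ _ hCA_ne, hCA, hCB, hJB, hDdB]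
  exact integral_bilinInterp_sub_integral_bilinInterp_zero hY₀₀ hY₀₁ hY₁₀ hY₁₁ hA₁₁ hB₁₁ hB₀₁
    (hDAbin 1 1 o₁ o₁) (hDBbin 1 1 o₁ o₁) (hDBbin 0 1 o₀ o₁)

theorem stmt_16 {Ω : Type*} [MeasurableSpace Ω] (μ : Measure Ω) [IsProbabilityMeasure μ]
    (ZA ZB : Ω → ℝ) (DA DB : ℝ → ℝ → Ω → ℝ) (Y : ℝ → ℝ → Ω → ℝ)
    (DAobs DBobs Yobs : Ω → ℝ)
    (hZAm : Measurable ZA) (hZBm : Measurable ZB)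
    (hZAbin : ∀ ω, ZA ω = 0 ∨ ZA ω = 1) (hZBbin : ∀ ω, ZB ω = 0 ∨ ZB ω = 1)
    (hDAm : ∀ z1 z2 : ℝ, (z1 = 0 ∨ z1 = 1) → (z2 = 0 ∨ z2 = 1) → Measurable (DA z1 z2))
    (hDBm : ∀ z1 z2 : ℝ, (z1 = 0 ∨ z1 = 1) → (z2 = 0 ∨ z2 = 1) → Measurable (DB z1 z2))
    (hDAbin : ∀ z1 z2 : ℝ, (z1 = 0 ∨ z1 = 1) → (z2 = 0 ∨ z2 = 1) →
      ∀ ω, DA z1 z2 ω = 0 ∨ DA z1 z2 ω = 1)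
    (hDBbin : ∀ z1 z2 : ℝ, (z1 = 0 ∨ z1 = 1) → (z2 = 0 ∨ z2 = 1) →
      ∀ ω, DB z1 z2 ω = 0 ∨ DB z1 z2 ω = 1)
    (hYm : ∀ d1 d2 : ℝ, (d1 = 0 ∨ d1 = 1) → (d2 = 0 ∨ d2 = 1) → Measurable (Y d1 d2))
    (hYint : ∀ d1 d2 : ℝ, (d1 = 0 ∨ d1 = 1) → (d2 = 0 ∨ d2 = 1) → Integrable (Y d1 d2) μ)
    (hDAobs : ∀ ω, DAobs ω = DA (ZA ω) (ZB ω) ω)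
    (hDBobs : ∀ ω, DBobs ω = DB (ZA ω) (ZB ω) ω)
    (hYobs : ∀ ω, Yobs ω = Y (DAobs ω) (DBobs ω) ω)
    (hindep : IndepFun (fun ω => (ZA ω, ZB ω))
      (fun ω => (Y 0 0 ω, Y 0 1 ω, Y 1 0 ω, Y 1 1 ω,
        DA 0 0 ω, DA 0 1 ω, DA 1 0 ω, DA 1 1 ω,
        DB 0 0 ω, DB 0 1 ω, DB 1 0 ω, DB 1 1 ω)) μ)
    (honcA : ∀ z : ℝ, (z = 0 ∨ z = 1) → ∀ ω, DA 0 z ω = 0)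
    (honcB : ∀ z : ℝ, (z = 0 ∨ z = 1) → ∀ ω, DB z 0 ω = 0)
    (hz11 : 0 < μ {ω | ZA ω = 1 ∧ ZB ω = 1}) (hz01 : 0 < μ {ω | ZA ω = 0 ∧ ZB ω = 1})
    (CA CB JB DdB : Set Ω)
    (hCA : CA = {ω | DA 1 1 ω = 1}) (hCB : CB = {ω | DB 1 1 ω = 1})
    (hJB : JB = {ω | DB 0 1 ω = 0 ∧ DB 1 1 ω = 1})
    (hDdB : DdB = {ω | DB 0 1 ω = 1 ∧ DB 1 1 ω = 0})
    (hfs : 0 < μ CA)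
    (δA1 : ℝ)
    (hδ : δA1 = (cexp μ Yobs {ω | ZA ω = 1 ∧ ZB ω = 1} -
        cexp μ Yobs {ω | ZA ω = 0 ∧ ZB ω = 1}) /
      (cexp μ DAobs {ω | ZA ω = 1 ∧ ZB ω = 1} -
        cexp μ DAobs {ω | ZA ω = 0 ∧ ZB ω = 1})) :
    δA1 * (μ CA).toReal = (∫ ω in CA, (Y 1 0 ω - Y 0 0 ω) ∂μ) +
      (∫ ω in JB, (Y 0 1 ω - Y 0 0 ω) ∂μ) - (∫ ω in DdB, (Y 0 1 ω - Y 0 0 ω) ∂μ) +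
        ∫ ω in CA ∩ CB, (Y 1 1 ω - Y 0 1 ω - Y 1 0 ω + Y 0 0 ω) ∂μ :=
  stmt_16_general μ ZA ZB DA DB Y DAobs DBobs Yobs hZAm hZBm hDAm hDBm hDAbin hDBbin hYint hDAobs
    hDBobs hYobs hindep honcA hz11 hz01 CA CB JB DdB hCA hCB hJB hDdB hfs δA1 hδ
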